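/- For every y ∈ {−1,1}^{ℤ₊} and every i ∈ ℤ₊, the limit w_i(y) := lim_{n→∞} w_i^{(n)}(y) exists; moreover there are constants C > 0 and ϱ ∈ (0,1), independent of y (one may take ϱ = |1−2p| when p ≠ 1/2 and C = (|J|+|K|)/(1−ϱ)), such that |w_i^{(n)}(y) − w_i(y)| ≤ C·ϱ^{n−i} for all n ≥ i. -/

import Mathlib

/-!
The map `A = logCoshRatio J` is a contraction with constant `|tanh J| = |1 - 2p|`: its
derivative is `sinh J cosh J / (cosh (u + J) cosh (u - J))`, and
`cosh (u + J) cosh (u - J) = sinh² u + cosh² J`. Since `log ∘ cosh` is 1-Lipschitz, also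
`|A| ≤ |J|`, so every `w_i^{(n)}` is bounded by `|J| + |K|`. Two backward recursions stopped
at `n + 1 ≤ m + 1` therefore differ at level `i` by at most `(|J| + |K|) ϱ^(n+1-i)`, which
makes `n ↦ w_i^{(n)}` Cauchy and gives the rate.
-/

open Real Filter Topology NNReal

noncomputable def logCoshRatio (J u : ℝ) : ℝ :=
  1 / 2 * log (cosh (u + J) / cosh (u - J))

theorem hasDerivAt_log_cosh (x : ℝ) : HasDerivAt (fun x => log (cosh x)) (tanh x) x := by
  simpa [tanh_eq_sinh_div_cosh] using (hasDerivAt_cosh x).log (cosh_pos x).ne'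

theorem lipschitzWith_log_cosh : LipschitzWith 1 (fun x => log (cosh x)) :=
  lipschitzWith_of_nnnorm_deriv_le (fun x => (hasDerivAt_log_cosh x).differentiableAt)
    fun x => by
      rw [(hasDerivAt_log_cosh x).deriv, ← NNReal.coe_le_coe, coe_nnnorm, NNReal.coe_one,
        Real.norm_eq_abs, abs_le]
      exact ⟨(neg_one_lt_tanh x).le, (tanh_lt_one x).le⟩

theorem logCoshRatio_eq (J u : ℝ) :
    logCoshRatio J u = (log (cosh (u + J)) - log (cosh (u - J))) / 2 := by
  rw [logCoshRatio, log_div (cosh_pos _).ne' (cosh_pos _).ne']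
  ring

theorem abs_logCoshRatio_le (J u : ℝ) : |logCoshRatio J u| ≤ |J| := by
  have h := lipschitzWith_log_cosh.dist_le_mul (u + J) (u - J)
  rw [NNReal.coe_one, one_mul, Real.dist_eq, Real.dist_eq, show u + J - (u - J) = 2 * J by ring,
    abs_mul, abs_two] at h
  rw [logCoshRatio_eq, abs_div, abs_two]
  linarith

theorem cosh_add_mul_cosh_sub (u J : ℝ) :
    cosh (u + J) * cosh (u - J) = sinh u ^ 2 + cosh J ^ 2 := by
  rw [cosh_add, cosh_sub]
  linear_combination cosh J ^ 2 * cosh_sq u + sinh u ^ 2 * cosh_sq J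

theorem tanh_add_sub_tanh_sub (u J : ℝ) :
    tanh (u + J) - tanh (u - J) = 2 * sinh J * cosh J / (cosh (u + J) * cosh (u - J)) := by
  rw [tanh_eq_sinh_div_cosh, tanh_eq_sinh_div_cosh,
    div_sub_div _ _ (cosh_pos _).ne' (cosh_pos _).ne']
  congr 1
  rw [sinh_add, cosh_sub, cosh_add, sinh_sub]
  linear_combination (2 * cosh J * sinh J) * cosh_sq_sub_sinh_sq u

theorem abs_tanh_add_sub_tanh_sub_le (u J : ℝ) :
    |tanh (u + J) - tanh (u - J)| ≤ 2 * |tanh J| := by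
  have hcJ := cosh_pos J
  have hprod : cosh J ^ 2 ≤ cosh (u + J) * cosh (u - J) := by
    rw [cosh_add_mul_cosh_sub]; exact le_add_of_nonneg_left (sq_nonneg _)
  rw [tanh_add_sub_tanh_sub, tanh_eq_sinh_div_cosh, abs_div, abs_div, abs_of_pos hcJ,
    abs_of_pos (mul_pos (cosh_pos _) (cosh_pos _)), abs_mul, abs_mul, abs_two, abs_of_pos hcJ,
    div_le_iff₀ (mul_pos (cosh_pos _) (cosh_pos _))]
  calc 2 * |sinh J| * cosh J = 2 * (|sinh J| / cosh J) * cosh J ^ 2 := by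
        field_simp
    _ ≤ 2 * (|sinh J| / cosh J) * (cosh (u + J) * cosh (u - J)) := by gcongr

theorem hasDerivAt_logCoshRatio (J u : ℝ) :
    HasDerivAt (logCoshRatio J) ((tanh (u + J) - tanh (u - J)) / 2) u := by
  have h := (((hasDerivAt_log_cosh (u + J)).comp u ((hasDerivAt_id u).add_const J)).sub
    ((hasDerivAt_log_cosh (u - J)).comp u ((hasDerivAt_id u).sub_const J))).div_const 2
  simp only [mul_one] at h
  exact h.congr_of_eventuallyEq (Eventually.of_forall fun v => logCoshRatio_eq J v)

theorem lipschitzWith_logCoshRatio (J : ℝ) : LipschitzWith ‖tanh J‖₊ (logCoshRatio J) :=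
  lipschitzWith_of_nnnorm_deriv_le (fun u => (hasDerivAt_logCoshRatio J u).differentiableAt)
    fun u => by
      rw [(hasDerivAt_logCoshRatio J u).deriv, ← NNReal.coe_le_coe, coe_nnnorm, coe_nnnorm,
        Real.norm_eq_abs, Real.norm_eq_abs, abs_div, abs_two, div_le_iff₀' two_pos]
      exact abs_tanh_add_sub_tanh_sub_le u J

theorem tanh_half_log_div {p : ℝ} (hp0 : 0 < p) (hp1 : p < 1) :
    tanh (1 / 2 * log ((1 - p) / p)) = 1 - 2 * p := by
  set x := 1 / 2 * log ((1 - p) / p)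
  have hx : exp x * exp x * p = 1 - p := by
    rw [← exp_add, show x + x = log ((1 - p) / p) by ring, exp_log (by bound),
      div_mul_cancel₀ _ hp0.ne']
  rw [tanh_eq, exp_neg, div_eq_iff (by positivity)]
  field_simp
  linear_combination 2 * hx

section BackwardRecursion

variable {X : Type*} [MetricSpace X] {g : ℕ → X → X} {ϱ : ℝ≥0} {W : ℕ → ℕ → X}

theorem dist_le_pow_mul_dist_of_backward (hg : ∀ i, LipschitzWith ϱ (g i))
    (hW : ∀ n i, i ≤ n → W n i = g i (W n (i + 1))) {n m i : ℕ} (hnm : n ≤ m)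
    (hi : i ≤ n + 1) :
    dist (W n i) (W m i) ≤ (ϱ : ℝ) ^ (n + 1 - i) * dist (W n (n + 1)) (W m (n + 1)) := by
  induction hk : n + 1 - i generalizing i with
  | zero =>
    obtain rfl : i = n + 1 := by omega
    simp
  | succ k ih =>
    rw [hW n i (by omega), hW m i (by omega), pow_succ', mul_assoc]
    exact ((hg i).dist_le_mul _ _).trans
      (mul_le_mul_of_nonneg_left (ih (by omega) (by omega)) ϱ.2)

theorem exists_tendsto_of_backward [CompleteSpace X] (hg : ∀ i, LipschitzWith ϱ (g i))
    (hW : ∀ n i, i ≤ n → W n i = g i (W n (i + 1))) (hϱ : ϱ < 1) {D : ℝ}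
    (hD : ∀ n m, n ≤ m → dist (W n (n + 1)) (W m (n + 1)) ≤ D) :
    ∃ w : ℕ → X, (∀ i, Tendsto (fun n => W n i) atTop (𝓝 (w i))) ∧
      ∀ i n, i ≤ n + 1 → dist (W n i) (w i) ≤ D * ϱ ^ (n + 1 - i) := by
  have hcauchy (i n m : ℕ) (hi : i ≤ n + 1) (hnm : n ≤ m) :
      dist (W n i) (W m i) ≤ D * ϱ ^ (n + 1 - i) := by
    rw [mul_comm]
    exact (dist_le_pow_mul_dist_of_backward hg hW hnm hi).trans
      (mul_le_mul_of_nonneg_left (hD n m hnm) (by positivity))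
  have hlim : ∀ i, ∃ w, Tendsto (fun n => W n i) atTop (𝓝 w) := fun i => by
    refine ⟨_, (tendsto_add_atTop_iff_nat i).1 (cauchySeq_tendsto_of_complete
      (cauchySeq_of_le_geometric (ϱ : ℝ) (D * ϱ) hϱ fun k => ?_)).choose_spec⟩
    convert hcauchy i (k + i) (k + 1 + i) (by omega) (by omega) using 1
    rw [show k + i + 1 - i = k + 1 by omega]
    ring
  choose w hw using hlim
  refine ⟨w, hw, fun i n hi => le_of_tendsto (tendsto_const_nhds.dist (hw i)) ?_⟩
  filter_upwards [eventually_ge_atTop n] with m hm using hcauchy i n m hi hm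

end BackwardRecursion

theorem stmt_5_general (p : ℝ) (hp0 : 0 < p) (hp1 : p < 1) (hp2 : p ≠ 1 / 2)
    (J K : ℝ)
    (hJ : J = (1 / 2) * Real.log ((1 - p) / p))
    (A : ℝ → ℝ)
    (hA : ∀ u, A u = (1 / 2) * Real.log (Real.cosh (u + J) / Real.cosh (u - J)))
    (y : ℕ → ℝ) (hy : ∀ i, y i = 1 ∨ y i = -1)
    (W : ℕ → ℕ → ℝ)
    (hW0 : ∀ n i : ℕ, n < i → W n i = 0)
    (hWrec : ∀ n i : ℕ, i ≤ n → W n i = K * y i + A (W n (i + 1))) :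
    ∃ wlim : ℕ → ℝ,
      (∀ i : ℕ, Filter.Tendsto (fun n => W n i) Filter.atTop (nhds (wlim i))) ∧
      ∃ C > (0 : ℝ), ∃ ϱ ∈ Set.Ioo (0 : ℝ) 1,
        ϱ = |1 - 2 * p| ∧ C = (|J| + |K|) / (1 - ϱ) ∧
        ∀ i n : ℕ, i ≤ n → |W n i - wlim i| ≤ C * ϱ ^ (n - i) := by
  obtain rfl : A = logCoshRatio J := funext hA
  have htanh : tanh J = 1 - 2 * p := hJ ▸ tanh_half_log_div hp0 hp1
  set ϱ := |1 - 2 * p|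
  have hϱ : (‖tanh J‖₊ : ℝ) = ϱ := by rw [coe_nnnorm, norm_eq_abs, htanh]
  have hϱ0 : 0 < ϱ := abs_pos.2 fun h => hp2 (by linarith)
  have hϱ1 : ϱ < 1 := abs_lt.2 ⟨by linarith, by linarith⟩
  have hbound (n i : ℕ) : |W n i| ≤ |J| + |K| := by
    rcases lt_or_ge n i with h | h
    · rw [hW0 n i h, abs_zero]; positivity
    · have hyi : |y i| = 1 := by rcases hy i with h | h <;> simp [h]
      have hKy : |K * y i| = |K| := by rw [abs_mul, hyi, mul_one]
      rw [hWrec n i h]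
      linarith [abs_add_le (K * y i) (logCoshRatio J (W n (i + 1))),
        abs_logCoshRatio_le J (W n (i + 1))]
  obtain ⟨w, hw, hdist⟩ :=
    exists_tendsto_of_backward (g := fun i u => K * y i + logCoshRatio J u)
      (fun i => LipschitzWith.of_dist_le_mul fun u v => by
        simpa only [dist_add_left] using (lipschitzWith_logCoshRatio J).dist_le_mul u v)
      hWrec (by rw [← NNReal.coe_lt_coe, hϱ]; exact hϱ1) (D := |J| + |K|) fun n m _ => by
        rw [hW0 n (n + 1) n.lt_succ_self, dist_zero_left]; exact hbound m (n + 1)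
  have hJ0 : 0 < |J| := abs_pos.2 fun h => hϱ0.ne' (by simp [← hϱ, h])
  refine ⟨w, hw, _, div_pos (add_pos_of_pos_of_nonneg hJ0 (abs_nonneg K)) (sub_pos.2 hϱ1),
    _, ⟨hϱ0, hϱ1⟩, rfl, rfl, fun i n hin => ?_⟩
  calc |W n i - w i| ≤ (|J| + |K|) * ϱ ^ (n - i + 1) := by
        rw [← Real.dist_eq, ← hϱ, show n - i + 1 = n + 1 - i by omega]
        exact hdist i n (by omega)
    _ ≤ (|J| + |K|) / (1 - ϱ) * ϱ ^ (n - i) := by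
        rw [pow_succ', ← mul_assoc, div_eq_mul_one_div]
        gcongr
        exact hϱ1.le.trans (one_le_one_div (by linarith) (by linarith))

/-- For every `y ∈ {−1,1}^{ℤ₊}` and every `i ∈ ℤ₊`, the limit
`w_i(y) := lim_{n→∞} w_i^{(n)}(y)` exists; moreover there are constants `C > 0` and
`ϱ ∈ (0,1)`, independent of `y` (one may take `ϱ = |1−2p|` and `C = (|J|+|K|)/(1−ϱ)`),
such that `|w_i^{(n)}(y) − w_i(y)| ≤ C·ϱ^{n−i}` for all `n ≥ i`. Here `W n i` denotes
`w_i^{(n)}(y)`. -/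
theorem stmt_5 (p ε : ℝ) (hp0 : 0 < p) (hp1 : p < 1) (hp2 : p ≠ 1 / 2)
    (hε0 : 0 < ε) (hε1 : ε < 1)
    (J K : ℝ)
    (hJ : J = (1 / 2) * Real.log ((1 - p) / p))
    (hK : K = (1 / 2) * Real.log ((1 - ε) / ε))
    (A : ℝ → ℝ)
    (hA : ∀ u, A u = (1 / 2) * Real.log (Real.cosh (u + J) / Real.cosh (u - J)))
    (y : ℕ → ℝ) (hy : ∀ i, y i = 1 ∨ y i = -1)
    (W : ℕ → ℕ → ℝ)
    (hW0 : ∀ n i : ℕ, n < i → W n i = 0)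
    (hWrec : ∀ n i : ℕ, i ≤ n → W n i = K * y i + A (W n (i + 1))) :
    ∃ wlim : ℕ → ℝ,
      (∀ i : ℕ, Filter.Tendsto (fun n => W n i) Filter.atTop (nhds (wlim i))) ∧
      ∃ C > (0 : ℝ), ∃ ϱ ∈ Set.Ioo (0 : ℝ) 1,
        ϱ = |1 - 2 * p| ∧ C = (|J| + |K|) / (1 - ϱ) ∧
        ∀ i n : ℕ, i ≤ n → |W n i - wlim i| ≤ C * ϱ ^ (n - i) :=
  stmt_5_general p hp0 hp1 hp2 J K hJ A hA y hy W hW0 hWrec
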